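/- arXiv:1705.00595 — 2 statements merged into one kernel-verified Lean document; each statement's English description precedes it below -/
import Mathlib

section
/- Let D be an analysis instance and ⋈ a weak independence on its transformers. If σ and σ' are two sequences of transformers that are interleavings of the same configuration of the unfolding of D under ⋈ (i.e., both are topological sortings of the same finite labelled partial order in which any two causally unordered events carry ⋈-independent labels), then applying σ and σ' to the initial element d₀ yields the same element: state(σ) = state(σ'). -/
/-!
Induct on the second linear extension `e :: t'`. In the first one, `e` sits after a prefix `l₁`;
no event of `l₁` is ordered with `e` in either direction (it precedes `e` in one extension and
follows it in the other), so each of them commutes with `e` on reachable states. Hence `e` can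
be moved to the front of the first extension without changing the state, and the induction
hypothesis applies to the remaining events.
-/

namespace LinearExtension

variable {ε D : Type*} {h : ε → D → D} {Reach : Set D}

theorem foldl_apply_of_commute (hclosed : ∀ d ∈ Reach, ∀ e, h e d ∈ Reach) {e : ε} {l : List ε}
    (hcomm : ∀ f ∈ l, ∀ d ∈ Reach, h f (h e d) = h e (h f d)) {d : D} (hd : d ∈ Reach) :
    l.foldl (fun d e => h e d) (h e d) = h e (l.foldl (fun d e => h e d) d) := by
  induction l generalizing d with
  | nil => rfl
  | cons f t ih =>
    rw [List.foldl_cons, List.foldl_cons, hcomm f List.mem_cons_self d hd]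
    exact ih (fun g hg => hcomm g (List.mem_cons_of_mem f hg)) (hclosed d hd f)

theorem pairwise_not_lt_of_get_lt {lt : ε → ε → Prop} {l : List ε}
    (hsort : ∀ i j (hi : i < l.length) (hj : j < l.length),
      lt (l.get ⟨i, hi⟩) (l.get ⟨j, hj⟩) → i < j) :
    l.Pairwise (fun a b => ¬ lt b a) := by
  rw [List.pairwise_iff_get]
  intro i j hij hlt
  exact absurd (hsort j i j.isLt i.isLt hlt) (Nat.not_lt.mpr hij.le)

theorem foldl_eq_of_perm {lt : ε → ε → Prop} (hclosed : ∀ d ∈ Reach, ∀ e, h e d ∈ Reach)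
    (hcomm : ∀ e e', e ≠ e' → ¬ lt e e' → ¬ lt e' e → ∀ d ∈ Reach, h e (h e' d) = h e' (h e d))
    {l l' : List ε} (hperm : l.Perm l') (hl : l.Pairwise (fun a b => ¬ lt b a))
    (hl' : l'.Pairwise (fun a b => ¬ lt b a)) {d : D} (hd : d ∈ Reach) :
    l.foldl (fun d e => h e d) d = l'.foldl (fun d e => h e d) d := by
  induction l' generalizing l d with
  | nil => rw [List.perm_nil.mp hperm]
  | cons e t' ih =>
    obtain ⟨l₁, l₂, rfl⟩ := List.append_of_mem (hperm.mem_iff.mpr List.mem_cons_self)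
    obtain ⟨e_first, ht'⟩ := List.pairwise_cons.mp hl'
    have e_last : ∀ f ∈ l₁, ¬ lt e f := fun f hf =>
      (List.pairwise_append.mp hl).2.2 f hf e List.mem_cons_self
    have hcomm_e : ∀ f ∈ l₁, ∀ d ∈ Reach, h f (h e d) = h e (h f d) := by
      intro f hf d hd
      by_cases hfe : f = e
      · rw [hfe]
      have hft' : f ∈ t' :=
        (List.mem_cons.mp (hperm.subset (List.mem_append_left _ hf))).resolve_left hfe
      exact hcomm f e hfe (e_first f hft') (e_last f hf) d hd
    have hsub : (l₁ ++ l₂).Sublist (l₁ ++ e :: l₂) :=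
      (List.sublist_cons_self e l₂).append_left l₁
    rw [List.foldl_append, List.foldl_cons, ← foldl_apply_of_commute hclosed hcomm_e hd,
      ← List.foldl_append, List.foldl_cons]
    exact ih (List.perm_middle.symm.trans hperm).cons_inv (hl.sublist hsub) ht'
      (hclosed d hd e)

end LinearExtension

open LinearExtension in
theorem stmt_6_general {ε D : Type*} (lt : ε → ε → Prop)
    (h : ε → D → D) (indep : (D → D) → (D → D) → Prop)
    (Reach : Set D) (d0 : D)
    (hcomm : ∀ f g, indep f g → ∀ d ∈ Reach, f (g d) = g (f d))
    (hlabels : ∀ e e', e ≠ e' → ¬ lt e e' → ¬ lt e' e → indep (h e) (h e'))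
    (hd0 : d0 ∈ Reach)
    (hclosed : ∀ d ∈ Reach, ∀ e, h e d ∈ Reach)
    (l l' : List ε)
    (hperm : l.Perm l')
    (hsort : ∀ i j (hi : i < l.length) (hj : j < l.length),
      lt (l.get ⟨i, hi⟩) (l.get ⟨j, hj⟩) → i < j)
    (hsort' : ∀ i j (hi : i < l'.length) (hj : j < l'.length),
      lt (l'.get ⟨i, hi⟩) (l'.get ⟨j, hj⟩) → i < j) :
    l.foldl (fun d e => h e d) d0 = l'.foldl (fun d e => h e d) d0 :=
  foldl_eq_of_perm hclosed
    (fun e e' hne hee' he'e => hcomm _ _ (hlabels e e' hne hee' he'e)) hperm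
    (pairwise_not_lt_of_get_lt hsort) (pairwise_not_lt_of_get_lt hsort') hd0

theorem stmt_6 {ε D : Type*} (lt : ε → ε → Prop) (hstrict : IsStrictOrder ε lt)
    (h : ε → D → D) (indep : (D → D) → (D → D) → Prop)
    (Reach : Set D) (d0 : D)
    (hsym : Symmetric indep) (hirr : Irreflexive indep)
    (hcomm : ∀ f g, indep f g → ∀ d ∈ Reach, f (g d) = g (f d))
    (hlabels : ∀ e e', e ≠ e' → ¬ lt e e' → ¬ lt e' e → indep (h e) (h e'))
    (hd0 : d0 ∈ Reach)
    (hclosed : ∀ d ∈ Reach, ∀ e, h e d ∈ Reach)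
    (l l' : List ε) (hnd : l.Nodup) (hnd' : l'.Nodup)
    (hperm : l.Perm l')
    (hsort : ∀ i j (hi : i < l.length) (hj : j < l.length),
      lt (l.get ⟨i, hi⟩) (l.get ⟨j, hj⟩) → i < j)
    (hsort' : ∀ i j (hi : i < l'.length) (hj : j < l'.length),
      lt (l'.get ⟨i, hi⟩) (l'.get ⟨j, hj⟩) → i < j) :
    l.foldl (fun d e => h e d) d0 = l'.foldl (fun d e => h e d) d0 :=
  stmt_6_general lt h indep Reach d0 hcomm hlabels hd0 hclosed l l' hperm hsort hsort'
end

section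
/- Let D be an analysis instance and ⋈ an independence relation on transformers (a weak independence that additionally satisfies: for all reachable d, if f(d) ≠ ⊥ then f'(f(d)) ≠ ⊥ iff f'(d) ≠ ⊥). Let σ = f₁…fₙ be a sequence of pairwise ⋈-independent transformers each individually enabled at a reachable element d (fᵢ(d) ≠ ⊥ for all i). Then state of applying the whole sequence to d is not ⊥: (fₙ ∘ … ∘ f₁)(d) ≠ ⊥, provided every intermediate element remains reachable. -/
theorem stmt_7_general {D : Type*} [PartialOrder D] [OrderBot D]
    (indep : (D → D) → (D → D) → Prop) (Reach : Set D)
    (henab : ∀ f g, indep f g → ∀ d ∈ Reach, f d ≠ ⊥ → (g (f d) ≠ ⊥ ↔ g d ≠ ⊥))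
    (σ : List (D → D)) (hpw : σ.Pairwise indep)
    (d : D) (hd : d ∈ Reach) (hdbot : d ≠ ⊥)
    (hen : ∀ f ∈ σ, f d ≠ ⊥)
    (hclosed : ∀ x ∈ Reach, ∀ f ∈ σ, f x ≠ ⊥ → f x ∈ Reach) :
    σ.foldl (fun x f => f x) d ≠ ⊥ := by
  induction σ generalizing d with
  | nil => exact hdbot
  | cons f σ ih =>
    obtain ⟨hf_indep, hpw⟩ := List.pairwise_cons.mp hpw
    have hfd : f d ≠ ⊥ := hen f List.mem_cons_self
    have hfd_reach : f d ∈ Reach := hclosed d hd f List.mem_cons_self hfd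
    have hen_tail : ∀ g ∈ σ, g (f d) ≠ ⊥ := fun g hg =>
      (henab f g (hf_indep g hg) d hd hfd).mpr (hen g (List.mem_cons_of_mem f hg))
    exact ih hpw (f d) hfd_reach hfd hen_tail
      (fun x hx g hg => hclosed x hx g (List.mem_cons_of_mem f hg))

theorem stmt_7 {D : Type*} [PartialOrder D] [OrderBot D]
    (indep : (D → D) → (D → D) → Prop) (Reach : Set D)
    (hsym : Symmetric indep) (hirr : Irreflexive indep)
    (hcomm : ∀ f g, indep f g → ∀ d ∈ Reach, f (g d) = g (f d))
    (henab : ∀ f g, indep f g → ∀ d ∈ Reach, f d ≠ ⊥ → (g (f d) ≠ ⊥ ↔ g d ≠ ⊥))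
    (σ : List (D → D)) (hpw : σ.Pairwise indep)
    (hstrict : ∀ f ∈ σ, f ⊥ = ⊥)
    (d : D) (hd : d ∈ Reach) (hdbot : d ≠ ⊥)
    (hen : ∀ f ∈ σ, f d ≠ ⊥)
    (hclosed : ∀ x ∈ Reach, ∀ f ∈ σ, f x ≠ ⊥ → f x ∈ Reach) :
    σ.foldl (fun x f => f x) d ≠ ⊥ :=
  stmt_7_general indep Reach henab σ hpw d hd hdbot hen hclosed
end
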